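/- arXiv:math/0210150 — 2 statements merged into one kernel-verified Lean document; each statement's English description precedes it below -/
import Mathlib

section
/- For f ∈ C^n(A,A) and g ∈ C^m(A,A), one has Δ¹(f ⊗ g) = (−1)^{nm} Δ²(g ⊗ f), where Δ¹(f⊗g) = Σ_{i=1}^{m} (−1)^{i(n+m−1)} Δ_i(f ⌣ g) and Δ²(f⊗g) = Σ_{i=m+1}^{n+m} (−1)^{i(n+m−1)} Δ_i(f ⌣ g). -/
/- Model: Hochschild cochains C^n(A,M) are modeled as functions (Fin n → A) → M. -/

variable {R A : Type*} [CommRing R] [Ring A] [Algebra R A]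

/-- reindexing along an equality of arities -/
def castFn {A : Type*} {k k' : ℕ} (h : k = k') (v : Fin k' → A) : Fin k → A :=
  fun i => v ⟨(i : ℕ), h ▸ i.isLt⟩

/-- cyclic rotation of a tuple by `o` steps -/
def rotFn {A : Type*} {k : ℕ} (o : ℕ) (v : Fin k → A) : Fin k → A :=
  fun j => v ⟨((j : ℕ) + o) % k, Nat.mod_lt _ (Nat.lt_of_le_of_lt (Nat.zero_le _) j.isLt)⟩

/-- The Hochschild differential on `A`-valued cochains. -/
def hochδ {n : ℕ} (f : (Fin n → A) → A) : (Fin (n + 1) → A) → A :=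
  fun a =>
    a 0 * f (fun i => a i.succ)
      + ∑ j : Fin n, ((-1 : ℤ) ^ ((j : ℕ) + 1)) •
          f (fun k => if (k : ℕ) < (j : ℕ) then a k.castSucc
              else if (k : ℕ) = (j : ℕ) then a j.castSucc * a j.succ else a k.succ)
      + ((-1 : ℤ) ^ (n + 1)) • (f (fun i => a i.castSucc) * a (Fin.last n))

/-- The Hochschild differential on `A*`-valued cochains, for the bimodule
`A* = Hom(A,R)` with `(a·φ·b)(x) = φ(b·x·a)`. -/
def hochδDual {n : ℕ} (f : (Fin n → A) → Module.Dual R A) :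
    (Fin (n + 1) → A) → Module.Dual R A :=
  fun a =>
    (f (fun i => a i.succ)).comp (LinearMap.mulRight R (a 0))
      + ∑ j : Fin n, ((-1 : ℤ) ^ ((j : ℕ) + 1)) •
          f (fun k => if (k : ℕ) < (j : ℕ) then a k.castSucc
              else if (k : ℕ) = (j : ℕ) then a j.castSucc * a j.succ else a k.succ)
      + ((-1 : ℤ) ^ (n + 1)) •
          (f (fun i => a i.castSucc)).comp (LinearMap.mulLeft R (a (Fin.last n)))

/-- Cup product of Hochschild cochains. -/
def cupFn {n m : ℕ} (f : (Fin n → A) → A) (g : (Fin m → A) → A) :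
    (Fin (n + m) → A) → A :=
  fun a => f (fun i => a ⟨(i : ℕ), by have := i.isLt; omega⟩) *
    g (fun j => a ⟨n + (j : ℕ), by have := j.isLt; omega⟩)

/-- Gerstenhaber's composition `f ∘_j g` at the (0-indexed) slot `j`. -/
def compAt {p q : ℕ} (j : ℕ) (f : (Fin (p + 1) → A) → A) (g : (Fin (q + 1) → A) → A) :
    (Fin (p + q + 1) → A) → A :=
  fun a => f (fun k =>
    if (k : ℕ) < j then a ⟨(k : ℕ), by have := k.isLt; omega⟩
    else if (k : ℕ) = j then g (fun l => a ⟨(k : ℕ) + (l : ℕ), by have := k.isLt; have := l.isLt; omega⟩)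
    else a ⟨(k : ℕ) + q, by have := k.isLt; omega⟩)

/-- Gerstenhaber's pre-Lie product `f ∘ g = Σ_j (-1)^{(j-1)(m-1)} f ∘_j g`. -/
def circFn {p q : ℕ} (f : (Fin (p + 1) → A) → A) (g : (Fin (q + 1) → A) → A) :
    (Fin (p + q + 1) → A) → A :=
  fun a => ∑ j : Fin (p + 1), ((-1 : ℤ) ^ ((j : ℕ) * q)) • compAt (j : ℕ) f g a

/-- The Gerstenhaber bracket `[f,g] = f∘g - (-1)^{(n-1)(m-1)} g∘f`. -/
def gerstFn {p q : ℕ} (f : (Fin (p + 1) → A) → A) (g : (Fin (q + 1) → A) → A) :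
    (Fin (p + q + 1) → A) → A :=
  fun a => circFn f g a - ((-1 : ℤ) ^ (p * q)) • circFn g f (castFn (by omega) a)

/-- `Df` is the `Δ`-operator applied to `f ∈ C^{n+1}(A,A)`, characterized through the
inner product `B` by `⟨Δf(a_1,…,a_n), x⟩ = Σ_i (-1)^{i·n} ⟨f(cyclic rotation of (a,x)), 1⟩`. -/
def IsDelta (B : LinearMap.BilinForm R A) {n : ℕ}
    (f : (Fin (n + 1) → A) → A) (Df : (Fin n → A) → A) : Prop :=
  ∀ (a : Fin n → A) (x : A),
    B (Df a) x = ∑ i : Fin (n + 1),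
      ((-1 : ℤ) ^ (((i : ℕ) + 1) * n)) • B (f (rotFn (i : ℕ) (Fin.snoc a x))) 1

/-- `Δ¹(f ⊗ g) = (−1)^{nm} Δ²(g ⊗ f)` for `f ∈ C^n(A,A)`, `g ∈ C^m(A,A)`,
where `Δ¹(f⊗g) = Σ_{i=1}^{m} (−1)^{i(n+m−1)} Δ_i(f ⌣ g)` and
`Δ²(f⊗g) = Σ_{i=m+1}^{n+m} (−1)^{i(n+m−1)} Δ_i(f ⌣ g)`.  The equality of cochains is
expressed through the (non-degenerate) pairing: applied to `(a_1,…,a_{n+m−1})` and paired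
against `a_{n+m}`, i.e. evaluated on an arbitrary tuple `v = (a_1,…,a_{n+m})`. -/
theorem Delta1_eq_Delta2_swap
    (B : LinearMap.BilinForm R A) [Module.Finite R A]
    (hsymm : ∀ a b : A, B a b = B b a)
    (hinv : ∀ a b c : A, B (a * b) c = B a (b * c))
    (hnd : B.Nondegenerate)
    {n m : ℕ} (f : (Fin n → A) → A) (g : (Fin m → A) → A) :
    ∀ v : Fin (n + m) → A,
      ∑ i : Fin m, ((-1 : ℤ) ^ (((i : ℕ) + 1) * (n + m - 1))) •
          B (cupFn f g (rotFn (i : ℕ) v)) 1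
        = ((-1 : ℤ) ^ (n * m)) •
          ∑ i : Fin m, ((-1 : ℤ) ^ (((i : ℕ) + n + 1) * (n + m - 1))) •
            B (cupFn g f (castFn (by omega) (rotFn ((i : ℕ) + n) v))) 1 := by
  intro v
  rw [Finset.smul_sum]
  apply Finset.sum_congr rfl
  intro i _
  have hm : 1 ≤ m := by have := i.isLt; omega
  have hB : ∀ a b : A, B (a * b) 1 = B (b * a) 1 := by
    intro a b; rw [hinv, hinv, mul_one, mul_one, hsymm]
  -- the pairings agree
  have hval : B (cupFn f g (rotFn (i : ℕ) v)) 1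
      = B (cupFn g f (castFn (by omega) (rotFn ((i : ℕ) + n) v))) 1 := by
    unfold cupFn castFn rotFn
    rw [hB]
    refine congrArg (fun t => B t 1) (congrArg₂ (· * ·)
      (congrArg g (funext fun j => ?_)) (congrArg f (funext fun k => ?_)))
    · apply congrArg v
      apply Fin.ext
      show ((n + (j : ℕ)) + (i : ℕ)) % (n + m) = ((j : ℕ) + ((i : ℕ) + n)) % (n + m)
      congr 1
      omega
    · apply congrArg v
      apply Fin.ext
      show ((k : ℕ) + (i : ℕ)) % (n + m) = ((m + (k : ℕ)) + ((i : ℕ) + n)) % (n + m)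
      rw [show (m + (k : ℕ)) + ((i : ℕ) + n) = ((k : ℕ) + (i : ℕ)) + (n + m) by omega,
        Nat.add_mod_right]
  rw [hval, smul_smul]
  congr 1
  have hexp : ((i : ℕ) + n + 1) * (n + m - 1)
      = ((i : ℕ) + 1) * (n + m - 1) + n * (n + m - 1) := by
    rw [← Nat.add_mul]; congr 1; omega
  have heven : Even (n * m + n * (n + m - 1)) := by
    rw [← Nat.mul_add]
    rcases Nat.even_or_odd n with he | ho
    · exact he.mul_right _
    · obtain ⟨r, hr⟩ := ho
      exact Even.mul_left ⟨r + m, by omega⟩ n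
  rw [hexp, pow_add, ← mul_assoc, mul_comm ((-1 : ℤ) ^ (n * m)),
    mul_assoc, ← pow_add, heven.neg_one_pow, mul_one]
end

section
/- On the normalized Hochschild cochain subcomplex consisting of cochains f with f(a_1,…,a_n) = 0 whenever some a_i = 1, the operator Δ satisfies Δ² = 0 identically (on the chain level). -/
/- Model: Hochschild cochains C^n(A,M) are modeled as functions (Fin n → A) → M. -/

variable {R A : Type*} [CommRing R] [Ring A] [Algebra R A]

/-! Every cyclic rotation of `(b₁, …, bₙ, 1)` has an entry equal to `1`, so for a normalized
cochain `f` all terms defining `⟨Δf(b), 1⟩` vanish. The terms defining `⟨Δ²f(a), x⟩` are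
pairings `⟨Δf(b), 1⟩`, hence zero, and nondegeneracy gives `Δ²f = 0`. -/

theorem exists_rotFn_eq {α : Type*} {k : ℕ} (o : ℕ) (v : Fin k → α) (j : Fin k) :
    ∃ i : Fin k, rotFn o v i = v j := by
  have hk : 0 < k := j.pos
  refine ⟨⟨(j + (k - o % k)) % k, Nat.mod_lt _ hk⟩, congrArg v (Fin.ext ?_)⟩
  have hshift : (j : ℕ) + (k - o % k) + o = j + k * (o / k + 1) := by
    have := Nat.mod_add_div o k
    have := (Nat.mod_lt o hk).le
    rw [Nat.mul_add, Nat.mul_one]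
    omega
  simp only [Nat.mod_add_mod, hshift, Nat.add_mul_mod_self_left, Nat.mod_eq_of_lt j.isLt]

namespace IsDelta

variable {B : LinearMap.BilinForm R A} {n : ℕ}

theorem apply_one_eq_zero {f : (Fin (n + 1) → A) → A} {Df : (Fin n → A) → A}
    (hDf : IsDelta B f Df) (hnorm : ∀ (a : Fin (n + 1) → A) (i : Fin (n + 1)), a i = 1 → f a = 0)
    (b : Fin n → A) : B (Df b) 1 = 0 := by
  rw [hDf b 1]
  refine Finset.sum_eq_zero fun o _ => ?_
  obtain ⟨i, hi⟩ := exists_rotFn_eq (o : ℕ) (Fin.snoc b 1) (Fin.last n)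
  rw [hnorm _ i (by rw [hi, Fin.snoc_last]), map_zero, LinearMap.zero_apply, smul_zero]

theorem eq_zero_of_apply_one_eq_zero (hB : B.SeparatingLeft) {f : (Fin (n + 1) → A) → A}
    {Df : (Fin n → A) → A} (hDf : IsDelta B f Df) (hf : ∀ b, B (f b) 1 = 0) (a : Fin n → A) :
    Df a = 0 :=
  hB _ fun x => by
    rw [hDf a x]
    exact Finset.sum_eq_zero fun i _ => by rw [hf, smul_zero]

end IsDelta

theorem Delta_squared_zero_on_normalized_general
    (B : LinearMap.BilinForm R A)
    (hnd : B.Nondegenerate)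
    {p : ℕ} (f : (Fin (p + 2) → A) → A)
    (hnorm : ∀ (a : Fin (p + 2) → A) (i : Fin (p + 2)), a i = 1 → f a = 0)
    (Df : (Fin (p + 1) → A) → A) (hDf : IsDelta B f Df)
    (DDf : (Fin p → A) → A) (hDDf : IsDelta B Df DDf) :
    ∀ a : Fin p → A, DDf a = 0 :=
  hDDf.eq_zero_of_apply_one_eq_zero hnd.1 (hDf.apply_one_eq_zero hnorm)

/-- on the normalized Hochschild cochain subcomplex (cochains vanishing
whenever some argument equals the unit `1`), `Δ² = 0` holds identically on the chain
level. -/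
theorem Delta_squared_zero_on_normalized
    (B : LinearMap.BilinForm R A) [Module.Finite R A]
    (hsymm : ∀ a b : A, B a b = B b a)
    (hinv : ∀ a b c : A, B (a * b) c = B a (b * c))
    (hnd : B.Nondegenerate)
    {p : ℕ} (f : (Fin (p + 2) → A) → A)
    (hnorm : ∀ (a : Fin (p + 2) → A) (i : Fin (p + 2)), a i = 1 → f a = 0)
    (Df : (Fin (p + 1) → A) → A) (hDf : IsDelta B f Df)
    (DDf : (Fin p → A) → A) (hDDf : IsDelta B Df DDf) :
    ∀ a : Fin p → A, DDf a = 0 :=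
  Delta_squared_zero_on_normalized_general B hnd f hnorm Df hDf DDf hDDf
end
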